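/- Let (X,·,d) be a group which is complete and metric invariant (d(x·y, x·z) = d(y·x, z·x) = d(y,z) for all x,y,z), and let a ∈ X. Let f and g be two proper lower semicontinuous functions on X with values in ℝ ∪ {+∞}. Then the following are equivalent: (I) the map x ↦ (f ⊕ g)(x) has a strong minimum at a; (II) there exists (ỹ, z̃) ∈ X×X with ỹ·z̃ = a such that f has a strong minimum at ỹ and g has a strong minimum at z̃. -/

import Mathlib

/-! Along a minimising sequence `yₙ * zₙ = a` of `f ⊕ g`, the mixed pairs `(yₙ, z_k)` are again
nearly minimising, because `(f ⊕ g)(a) ≤ f y_k + g zₙ`; the strong minimum puts `yₙ * z_k` close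
to `a = y_k * z_k = yₙ * zₙ`, and invariance of the metric makes `(yₙ)` and `(zₙ)` Cauchy.
Their limits `ỹ, z̃` split `a` and, by lower semicontinuity, attain `(f ⊕ g)(a)`. Translating by
`z̃` on the right (by `ỹ` on the left) then carries the strong minimum of `f ⊕ g` over to `f`
(to `g`). Conversely `d(y z, ỹ z̃) ≤ d(y, ỹ) + d(z, z̃)`. -/

/-- Inf-convolution for functions with values in `ℝ ∪ {+∞}` (modelled in `EReal`)
on a group: `(f ⊕ g)(x) = inf { f y + g z : y * z = x }`. -/
noncomputable def infConvE {X : Type*} [Mul X] (f g : X → EReal) : X → EReal :=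
  fun x => sInf {r : EReal | ∃ y z : X, y * z = x ∧ r = f y + g z}

/-- A function `h : X → ℝ ∪ {+∞}` has a strong minimum at `x₀`: `h x₀` is finite,
is the infimum of `h`, and for every `ε > 0` there is `δ > 0` such that
`h x ≤ h x₀ + δ` implies `d(x, x₀) ≤ ε`. -/
def EStrongMin {X : Type*} [MetricSpace X] (h : X → EReal) (x₀ : X) : Prop :=
  h x₀ ≠ ⊤ ∧ h x₀ ≠ ⊥ ∧ (∀ x, h x₀ ≤ h x) ∧
    ∀ ε : ℝ, 0 < ε → ∃ δ : ℝ, 0 < δ ∧ ∀ x, h x ≤ h x₀ + (δ : EReal) → dist x x₀ ≤ ε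

open Filter Topology

theorem EReal.le_of_add_le_add_right {u v w : EReal} (hw_top : w ≠ ⊤) (hw_bot : w ≠ ⊥)
    (h : u + w ≤ v + w) : u ≤ v := by
  lift w to ℝ using ⟨hw_top, hw_bot⟩
  exact (EReal.addLECancellable_coe w).add_le_add_iff_right.1 h

theorem EReal.le_add_of_add_le_add_add {u v p q δ : EReal} (hq_top : q ≠ ⊤) (hq_bot : q ≠ ⊥)
    (hqv : q ≤ v) (h : u + v ≤ p + q + δ) : u ≤ p + δ :=
  EReal.le_of_add_le_add_right hq_top hq_bot <|
    calc u + q ≤ u + v := by gcongr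
      _ ≤ p + q + δ := h
      _ = p + δ + q := add_right_comm _ _ _

theorem EReal.add_le_of_tendsto_of_lowerSemicontinuousAt {ι α β : Type*} [TopologicalSpace α]
    [TopologicalSpace β] {l : Filter ι} [l.NeBot] {f : α → EReal} {g : β → EReal} {u : ι → α}
    {v : ι → β} {x : α} {y : β} {c : EReal} (hf : LowerSemicontinuousAt f x)
    (hg : LowerSemicontinuousAt g y) (hu : Tendsto u l (𝓝 x)) (hv : Tendsto v l (𝓝 y))
    (hc : Tendsto (fun i => f (u i) + g (v i)) l (𝓝 c)) : f x + g y ≤ c :=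
  calc f x + g y ≤ liminf (f ∘ u) l + liminf (g ∘ v) l :=
        add_le_add (hf.le_liminf.trans hu.liminf_le_liminf_comp)
          (hg.le_liminf.trans hv.liminf_le_liminf_comp)
    _ ≤ liminf (fun i => f (u i) + g (v i)) l := EReal.le_liminf_add
    _ = c := hc.liminf_eq

theorem EReal.add_coe_lt_add_coe {m : EReal} (hm_top : m ≠ ⊤) (hm_bot : m ≠ ⊥) {r s : ℝ}
    (h : r < s) : m + r < m + s := by
  lift m to ℝ using ⟨hm_top, hm_bot⟩
  exact_mod_cast add_lt_add_right h m

section IsometricMul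

variable {M : Type*} [Mul M] [PseudoMetricSpace M] [IsIsometricSMul M M] [IsIsometricSMul Mᵐᵒᵖ M]

theorem dist_mul_mul_le_of_isometricSMul (a₁ a₂ b₁ b₂ : M) :
    dist (a₁ * a₂) (b₁ * b₂) ≤ dist a₁ b₁ + dist a₂ b₂ :=
  calc dist (a₁ * a₂) (b₁ * b₂) ≤ dist (a₁ * a₂) (b₁ * a₂) + dist (b₁ * a₂) (b₁ * b₂) :=
        dist_triangle _ _ _
    _ = dist a₁ b₁ + dist a₂ b₂ := by rw [dist_mul_right, dist_mul_left]

theorem Filter.Tendsto.mul_of_isometricSMul {ι : Type*} {l : Filter ι} {u v : ι → M} {a b : M}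
    (hu : Tendsto u l (𝓝 a)) (hv : Tendsto v l (𝓝 b)) :
    Tendsto (fun i => u i * v i) l (𝓝 (a * b)) := by
  rw [tendsto_iff_dist_tendsto_zero] at hu hv ⊢
  refine squeeze_zero (fun _ => dist_nonneg) (fun i => dist_mul_mul_le_of_isometricSMul _ _ _ _) ?_
  simpa using hu.add hv

end IsometricMul

section InfConv

variable {X : Type*} [Mul X] {f g : X → EReal}

theorem infConvE_mul_le (f g : X → EReal) (y z : X) : infConvE f g (y * z) ≤ f y + g z :=
  sInf_le ⟨y, z, rfl, rfl⟩

theorem le_infConvE_iff {c : EReal} {x : X} :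
    c ≤ infConvE f g x ↔ ∀ y z, y * z = x → c ≤ f y + g z := by
  simp only [infConvE, le_sInf_iff, Set.mem_ofPred_eq]
  exact ⟨fun h y z hyz => h _ ⟨y, z, hyz, rfl⟩, fun h _ ⟨y, z, hyz, hr⟩ => hr ▸ h y z hyz⟩

theorem infConvE_lt_iff {c : EReal} {x : X} :
    infConvE f g x < c ↔ ∃ y z, y * z = x ∧ f y + g z < c := by
  simp [infConvE, sInf_lt_iff]

end InfConv

namespace EStrongMin

variable {X : Type*} [MetricSpace X] {h f g : X → EReal} {x₀ : X}

theorem of_isometry {Y : Type*} [MetricSpace Y] {k : Y → EReal} {φ : Y → X} {y₀ : Y} (c : ℝ)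
    (hh : EStrongMin h (φ y₀)) (hφ : Isometry φ) (hle : ∀ y, h (φ y) ≤ k y + c)
    (heq : k y₀ + c = h (φ y₀)) : EStrongMin k y₀ := by
  obtain ⟨hne_top, hne_bot, hmin, hsharp⟩ := hh
  have cancel {u v : EReal} : u + c ≤ v + c → u ≤ v :=
    (EReal.addLECancellable_coe c).add_le_add_iff_right.1
  refine ⟨?_, ?_, fun y => cancel (heq.trans_le ((hmin (φ y)).trans (hle y))), fun ε hε => ?_⟩
  · intro hk
    rw [hk, EReal.top_add_coe] at heq
    exact hne_top heq.symm
  · intro hk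
    rw [hk, EReal.bot_add] at heq
    exact hne_bot heq.symm
  · obtain ⟨δ, hδ, hdist⟩ := hsharp ε hε
    refine ⟨δ, hδ, fun y hy => ?_⟩
    rw [← hφ.dist_eq]
    refine hdist _ ?_
    calc h (φ y) ≤ k y + c := hle y
      _ ≤ k y₀ + δ + c := by gcongr
      _ = h (φ y₀) + δ := by rw [← heq, add_right_comm]

theorem infConvE_mul [Mul X] [IsIsometricSMul X X] [IsIsometricSMul Xᵐᵒᵖ X] {y₀ z₀ : X}
    (hf : EStrongMin f y₀) (hg : EStrongMin g z₀) : EStrongMin (infConvE f g) (y₀ * z₀) := by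
  obtain ⟨hf_top, hf_bot, hf_min, hf_sharp⟩ := hf
  obtain ⟨hg_top, hg_bot, hg_min, hg_sharp⟩ := hg
  have hlow : ∀ x, f y₀ + g z₀ ≤ infConvE f g x := fun x =>
    le_infConvE_iff.2 fun y z _ => add_le_add (hf_min y) (hg_min z)
  have hval : infConvE f g (y₀ * z₀) = f y₀ + g z₀ :=
    (infConvE_mul_le f g y₀ z₀).antisymm (hlow _)
  refine ⟨hval ▸ EReal.add_ne_top hf_top hg_top, hval ▸ EReal.add_ne_bot_iff.2 ⟨hf_bot, hg_bot⟩,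
    hval ▸ hlow, fun ε hε => ?_⟩
  obtain ⟨δ₁, hδ₁, hf_dist⟩ := hf_sharp (ε / 2) (half_pos hε)
  obtain ⟨δ₂, hδ₂, hg_dist⟩ := hg_sharp (ε / 2) (half_pos hε)
  refine ⟨min δ₁ δ₂ / 2, by positivity, fun x hx => ?_⟩
  rw [hval] at hx
  have hlt : infConvE f g x < f y₀ + g z₀ + (min δ₁ δ₂ : ℝ) :=
    hx.trans_lt <| EReal.add_coe_lt_add_coe (EReal.add_ne_top hf_top hg_top)
      (EReal.add_ne_bot_iff.2 ⟨hf_bot, hg_bot⟩) (half_lt_self (lt_min hδ₁ hδ₂))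
  obtain ⟨y, z, rfl, hyz⟩ := infConvE_lt_iff.1 hlt
  have hy : f y ≤ f y₀ + δ₁ := EReal.le_add_of_add_le_add_add hg_top hg_bot (hg_min z)
    (hyz.le.trans (by gcongr; exact min_le_left _ _))
  have hz : g z ≤ g z₀ + δ₂ := EReal.le_add_of_add_le_add_add hf_top hf_bot (hf_min y)
    (by
      rw [add_comm (g z), add_comm (g z₀)]
      exact hyz.le.trans (by gcongr; exact min_le_right _ _))
  calc dist (y * z) (y₀ * z₀) ≤ dist y y₀ + dist z z₀ := dist_mul_mul_le_of_isometricSMul _ _ _ _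
    _ ≤ ε / 2 + ε / 2 := add_le_add (hf_dist y hy) (hg_dist z hz)
    _ = ε := add_halves ε

theorem of_infConvE [Mul X] [IsIsometricSMul X X] [IsIsometricSMul Xᵐᵒᵖ X] {y₀ z₀ : X}
    (hm : EStrongMin (infConvE f g) (y₀ * z₀)) (heq : f y₀ + g z₀ = infConvE f g (y₀ * z₀)) :
    EStrongMin f y₀ ∧ EStrongMin g z₀ := by
  obtain ⟨hf_bot, hg_bot⟩ := EReal.add_ne_bot_iff.1 (heq ▸ hm.2.1)
  obtain ⟨hf_top, hg_top⟩ := (EReal.add_ne_top_iff_ne_top₂ hf_bot hg_bot).1 (heq ▸ hm.1)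
  obtain ⟨p, hp⟩ : ∃ p : ℝ, (p : EReal) = f y₀ := ⟨_, EReal.coe_toReal hf_top hf_bot⟩
  obtain ⟨q, hq⟩ : ∃ q : ℝ, (q : EReal) = g z₀ := ⟨_, EReal.coe_toReal hg_top hg_bot⟩
  constructor
  · refine hm.of_isometry (φ := (· * z₀)) q (isometry_mul_right z₀) (fun y => ?_) (hq ▸ heq)
    exact hq ▸ infConvE_mul_le f g y z₀
  · refine hm.of_isometry (φ := (y₀ * ·)) p (isometry_mul_left y₀) (fun z => ?_) ?_
    · rw [hp, add_comm]
      exact infConvE_mul_le f g y₀ z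
    · rw [hp, add_comm, heq]

variable [Monoid X] [IsIsometricSMul X X] [IsIsometricSMul Xᵐᵒᵖ X] {a : X}

theorem dist_le_of_infConvE (hm : EStrongMin (infConvE f g) a) {ε : ℝ} (hε : 0 < ε) :
    ∃ δ > (0 : ℝ), ∀ y z y' z', y * z = a → y' * z' = a →
      f y + g z ≤ infConvE f g a + δ → f y' + g z' ≤ infConvE f g a + δ →
      dist y y' ≤ ε ∧ dist z z' ≤ ε := by
  obtain ⟨hm_top, hm_bot, hm_min, hm_sharp⟩ := hm
  obtain ⟨δ, hδ, hdist⟩ := hm_sharp ε hε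
  refine ⟨δ / 2, half_pos hδ, fun y z y' z' hyz hyz' h h' => ?_⟩
  set m := infConvE f g a
  -- `(y, z')` is as good as the two pairs together, because `m ≤ f y' + g z`.
  have hcross : infConvE f g (y * z') ≤ m + δ := by
    refine (infConvE_mul_le f g y z').trans (EReal.le_of_add_le_add_right hm_top hm_bot ?_)
    calc f y + g z' + m ≤ f y + g z' + (f y' + g z) := by
          gcongr
          exact (hm_min (y' * z)).trans (infConvE_mul_le f g y' z)
      _ = (f y + g z) + (f y' + g z') := by abel
      _ ≤ (m + (δ / 2 : ℝ)) + (m + (δ / 2 : ℝ)) := add_le_add h h'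
      _ = m + δ + m := by rw [add_add_add_comm, ← EReal.coe_add, add_halves]; abel
  have hprod := hdist _ hcross
  constructor
  · rwa [← hyz', dist_mul_right] at hprod
  · rwa [← hyz, dist_mul_left, dist_comm] at hprod

theorem cauchySeq_of_infConvE (hm : EStrongMin (infConvE f g) a) {y z : ℕ → X}
    (hyz : ∀ n, y n * z n = a)
    (hlim : Tendsto (fun n => f (y n) + g (z n)) atTop (𝓝 (infConvE f g a))) :
    CauchySeq y ∧ CauchySeq z := by
  have key : ∀ ε > (0 : ℝ), ∃ N, ∀ n ≥ N, ∀ k ≥ N,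
      dist (y n) (y k) ≤ ε ∧ dist (z n) (z k) ≤ ε := by
    intro ε hε
    obtain ⟨δ, hδ, hdist⟩ := hm.dist_le_of_infConvE hε
    have hlt : infConvE f g a < infConvE f g a + δ := by
      simpa using EReal.add_coe_lt_add_coe hm.1 hm.2.1 hδ
    obtain ⟨N, hN⟩ := eventually_atTop.1 (hlim.eventually (eventually_le_nhds hlt))
    exact ⟨N, fun n hn k hk => hdist _ _ _ _ (hyz n) (hyz k) (hN n hn) (hN k hk)⟩
  simp only [Metric.uniformity_basis_dist_le.cauchySeq_iff]
  exact ⟨fun ε hε => (key ε hε).imp fun N hN n hn k hk => (hN n hn k hk).1,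
    fun ε hε => (key ε hε).imp fun N hN n hn k hk => (hN n hn k hk).2⟩

theorem exists_mul_eq_add_eq_infConvE [CompleteSpace X] (hf : LowerSemicontinuous f)
    (hg : LowerSemicontinuous g) (hm : EStrongMin (infConvE f g) a) :
    ∃ y₀ z₀, y₀ * z₀ = a ∧ f y₀ + g z₀ = infConvE f g a := by
  obtain ⟨u, -, hu_lim, hu_mem⟩ := exists_seq_tendsto_sInf
    (S := {r | ∃ y z, y * z = a ∧ r = f y + g z}) ⟨_, a, 1, mul_one a, rfl⟩ (OrderBot.bddBelow _)
  choose y z hyz hu using hu_mem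
  have hlim : Tendsto (fun n => f (y n) + g (z n)) atTop (𝓝 (infConvE f g a)) := by
    rw [show (fun n => f (y n) + g (z n)) = u from (funext hu).symm]
    exact hu_lim
  obtain ⟨hy, hz⟩ := hm.cauchySeq_of_infConvE hyz hlim
  obtain ⟨y₀, hy₀⟩ := cauchySeq_tendsto_of_complete hy
  obtain ⟨z₀, hz₀⟩ := cauchySeq_tendsto_of_complete hz
  have hmul : y₀ * z₀ = a :=
    tendsto_nhds_unique (hy₀.mul_of_isometricSMul hz₀) <| by
      simpa only [hyz] using tendsto_const_nhds
  refine ⟨y₀, z₀, hmul, le_antisymm ?_ ?_⟩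
  · exact EReal.add_le_of_tendsto_of_lowerSemicontinuousAt (hf y₀) (hg z₀) hy₀ hz₀ hlim
  · exact hmul ▸ (hm.2.2.1 _).trans (infConvE_mul_le f g y₀ z₀)

end EStrongMin

theorem strongMin_infConv_iff_group_general {X : Type*} [Group X] [MetricSpace X] [CompleteSpace X]
    (hleft : ∀ x y z : X, dist (x * y) (x * z) = dist y z)
    (hright : ∀ x y z : X, dist (y * x) (z * x) = dist y z)
    (a : X) (f g : X → EReal)
    (hflsc : LowerSemicontinuous f) (hglsc : LowerSemicontinuous g) :
    EStrongMin (infConvE f g) a ↔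
      ∃ ty tz : X, ty * tz = a ∧ EStrongMin f ty ∧ EStrongMin g tz := by
  have : IsIsometricSMul X X := ⟨fun x => .of_dist_eq (hleft x)⟩
  have : IsIsometricSMul Xᵐᵒᵖ X := ⟨fun x => .of_dist_eq (hright x.unop)⟩
  constructor
  · intro hm
    obtain ⟨ty, tz, rfl, heq⟩ := hm.exists_mul_eq_add_eq_infConvE hflsc hglsc
    exact ⟨ty, tz, rfl, hm.of_infConvE heq⟩
  · rintro ⟨ty, tz, rfl, hf, hg⟩
    exact hf.infConvE_mul hg

/-- on a complete metric invariant group, for proper lsc functions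
`f, g`, the inf-convolution `f ⊕ g` has a strong minimum at `a` iff there exists
`(ỹ, z̃)` with `ỹ·z̃ = a` such that `f` has a strong minimum at `ỹ` and `g` has a
strong minimum at `z̃`. -/
theorem strongMin_infConv_iff_group {X : Type*} [Group X] [MetricSpace X] [CompleteSpace X]
    (hleft : ∀ x y z : X, dist (x * y) (x * z) = dist y z)
    (hright : ∀ x y z : X, dist (y * x) (z * x) = dist y z)
    (a : X) (f g : X → EReal)
    (hfbot : ∀ x, f x ≠ ⊥) (hgbot : ∀ x, g x ≠ ⊥)
    (hfproper : ∃ x, f x ≠ ⊤) (hgproper : ∃ x, g x ≠ ⊤)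
    (hflsc : LowerSemicontinuous f) (hglsc : LowerSemicontinuous g) :
    EStrongMin (infConvE f g) a ↔
      ∃ ty tz : X, ty * tz = a ∧ EStrongMin f ty ∧ EStrongMin g tz :=
  strongMin_infConv_iff_group_general hleft hright a f g hflsc hglsc
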